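/- Under the identification of a split maximal torus T of H with (F̄^×)^r acting diagonally on X, if S is a subtorus of T contained in H_k = {h : rank(h−1;X) ≤ k} with dim S = k/2, then the common fixed point space X^S has dimension dim X − k. -/

import Mathlib

/-- The diagonal action of the split maximal torus `T ≅ (Kˣ)^r` on `X = K^r × K^m × K^r`. -/
def torusAct (K : Type*) [Field K] (r m : ℕ) (t : Fin r → Kˣ) :
    ((Fin r → K) × (Fin m → K) × (Fin r → K)) →ₗ[K]
      ((Fin r → K) × (Fin m → K) × (Fin r → K)) where
  toFun p := (fun i => (t i : K) * p.1 i, p.2.1, fun i => (((t i)⁻¹ : Kˣ) : K) * p.2.2 i)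
  map_add' p q := by
    refine Prod.ext ?_ (Prod.ext ?_ ?_) <;> funext i <;> simp <;> ring
  map_smul' c p := by
    refine Prod.ext ?_ (Prod.ext ?_ ?_) <;> funext i <;> simp <;> ring

/-- A monomial homomorphism `(Kˣ)^d → (Kˣ)^r`, modelling a `d`-dimensional subtorus. -/
def monomialHom (K : Type*) [Field K] (r d : ℕ) (M : Fin r → Fin d → ℤ)
    (s : Fin d → Kˣ) : Fin r → Kˣ :=
  fun i => ∏ j, s j ^ M i j

/-!
A torus element `t` fixes the middle block and the weight vectors `eᵢ, e₋ᵢ` with `tᵢ = 1` and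
moves the others, so `rank (t - 1) = 2 #{i | tᵢ ≠ 1}`. For the subtorus `S` with character
matrix `M`, `X^S` is therefore the coordinate subspace of the zero rows of `M`, of dimension
`dim X - 2N` with `N` the number of nonzero rows. A generic point of `S`, of the form
`(u ^ Bʲ)ⱼ` with `B` and `u` avoiding finitely many roots in the infinite rings `ℤ` and `K`,
moves all `N` coordinates, so `2N ≤ k`. Injectivity of `S → T` makes `e ↦ M e` injective on
`ℤᵈ`, so `d ≤ N`; with `d = k / 2` this gives `2N = k`.
-/

theorem Polynomial.exists_forall_eval_ne_zero {R ι : Type*} [CommRing R] [IsDomain R]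
    [Infinite R] [Fintype ι] (p : ι → Polynomial R) :
    ∃ x, ∀ i, p i ≠ 0 → (p i).eval x ≠ 0 := by
  classical
  obtain ⟨x, hx⟩ :=
    Infinite.exists_notMem_finset (Finset.univ.biUnion fun i => (p i).roots.toFinset)
  exact ⟨x, fun i hi hroot => hx <| Finset.mem_biUnion.2
    ⟨i, Finset.mem_univ _, Multiset.mem_toFinset.2 ((Polynomial.mem_roots hi).2 hroot)⟩⟩

theorem Units.exists_forall_zpow_ne_one {K ι : Type*} [Field K] [Infinite K] [Fintype ι]
    (n : ι → ℤ) : ∃ u : Kˣ, ∀ i, n i ≠ 0 → u ^ n i ≠ 1 := by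
  obtain ⟨x, hx⟩ := Polynomial.exists_forall_eval_ne_zero fun i : Option ι =>
    i.elim (Polynomial.X : Polynomial K) fun i => Polynomial.X ^ (n i).natAbs - 1
  have hx0 : x ≠ 0 := by simpa using hx none Polynomial.X_ne_zero
  refine ⟨Units.mk0 x hx0, fun i hi hu => hx (some i) ?_ ?_⟩
  · simpa using Polynomial.X_pow_sub_C_ne_zero (Int.natAbs_pos.2 hi) (1 : K)
  · rw [← pow_natAbs_eq_one, Units.ext_iff] at hu
    simpa [sub_eq_zero] using hu

theorem Finset.prod_zpow_eq_zpow_sum {G ι : Type*} [CommGroup G] (s : Finset ι) (f : ι → ℤ)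
    (a : G) : ∏ i ∈ s, a ^ f i = a ^ ∑ i ∈ s, f i := by
  induction s using Finset.cons_induction with
  | empty => simp
  | cons i s hi ih => rw [Finset.prod_cons, Finset.sum_cons, ih, zpow_add]

theorem Nat.card_subtype_add_card_subtype_not {α : Type*} [Finite α] (p : α → Prop) :
    Nat.card {a // p a} + Nat.card {a // ¬ p a} = Nat.card α :=
  by classical exact Nat.card_sum.symm.trans (Nat.card_congr (Equiv.sumCompl p))

/-- The exponents are `eⱼ = Bʲ` for a common non-root `B` of the polynomials `∑ⱼ M i j Xʲ`. -/
theorem exists_forall_sum_mul_ne_zero {ι : Type*} [Fintype ι] {d : ℕ} (M : ι → Fin d → ℤ) :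
    ∃ e : Fin d → ℤ, ∀ i, M i ≠ 0 → ∑ j, M i j * e j ≠ 0 := by
  obtain ⟨B, hB⟩ := Polynomial.exists_forall_eval_ne_zero
    (fun i => ∑ j : Fin d, Polynomial.monomial (j : ℕ) (M i j))
  refine ⟨fun j => B ^ (j : ℕ), fun i hi => ?_⟩
  obtain ⟨j, hj⟩ := Function.ne_iff.1 hi
  have hcoeff : (∑ k : Fin d, Polynomial.monomial (k : ℕ) (M i k)).coeff j = M i j := by
    simp [Polynomial.coeff_monomial, Fin.val_inj]
  simpa [Polynomial.eval_finsetSum] using hB i fun h => hj (by simpa [h] using hcoeff.symm)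

section MonomialHom

variable {K : Type*} [Field K] {r d : ℕ} (M : Fin r → Fin d → ℤ)

theorem monomialHom_zpow (u : Kˣ) (e : Fin d → ℤ) (i : Fin r) :
    monomialHom K r d M (fun j => u ^ e j) i = u ^ ∑ j, M i j * e j := by
  simp only [monomialHom, ← zpow_mul, Finset.prod_zpow_eq_zpow_sum, mul_comm]

theorem monomialHom_apply_eq_one_of_eq_zero {i : Fin r} (hi : M i = 0) (s : Fin d → Kˣ) :
    monomialHom K r d M s i = 1 := by
  simp [monomialHom, hi]

variable [Infinite K]

theorem exists_forall_monomialHom_ne_one :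
    ∃ s : Fin d → Kˣ, ∀ i, M i ≠ 0 → monomialHom K r d M s i ≠ 1 := by
  obtain ⟨e, he⟩ := exists_forall_sum_mul_ne_zero M
  obtain ⟨u, hu⟩ := Units.exists_forall_zpow_ne_one (K := K) fun i => ∑ j, M i j * e j
  exact ⟨fun j => u ^ e j, fun i hi => by rw [monomialHom_zpow]; exact hu i (he i hi)⟩

/-- A nonzero kernel vector `e` of `M` would give a nontrivial one-parameter subgroup `u ↦ uᵉ`
of `(Kˣ)ᵈ` in the kernel of `monomialHom`. -/
theorem le_card_of_injective_monomialHom (hinj : Function.Injective (monomialHom K r d M)) :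
    d ≤ Nat.card {i // M i ≠ 0} := by
  let φ : (Fin d → ℤ) →ₗ[ℤ] ({i // M i ≠ 0} → ℤ) :=
    Matrix.mulVecLin (Matrix.of fun (i : {i // M i ≠ 0}) j => M i j)
  have hφ : Function.Injective φ := by
    rw [← LinearMap.ker_eq_bot, LinearMap.ker_eq_bot']
    intro e he
    obtain ⟨u, hu⟩ := Units.exists_forall_zpow_ne_one (K := K) e
    have hrow : ∀ i, ∑ j, M i j * e j = 0 := fun i => by
      by_cases hi : M i = 0
      · simp [hi]
      · exact congrFun he ⟨i, hi⟩
    have h1 : (fun j => u ^ e j) = 1 :=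
      hinj (funext fun i => by rw [monomialHom_zpow, hrow, zpow_zero]; simp [monomialHom])
    funext j
    by_contra hj
    exact hu j hj (congrFun h1 j)
  simpa [Nat.card_eq_fintype_card] using LinearMap.finrank_le_finrank_of_injective hφ

end MonomialHom

def coordSupported (K : Type*) [Field K] (r m : ℕ) (Q : Fin r → Prop) :
    Submodule K ((Fin r → K) × (Fin m → K) × (Fin r → K)) where
  carrier := {p | ∀ i, ¬ Q i → p.1 i = 0 ∧ p.2.2 i = 0}
  add_mem' ha hb i hi := by simp [(ha i hi).1, (ha i hi).2, (hb i hi).1, (hb i hi).2]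
  zero_mem' := by simp
  smul_mem' c p hp i hi := by simp [(hp i hi).1, (hp i hi).2]

section TorusAct

variable {K : Type*} [Field K] {r m : ℕ}

theorem mem_coordSupported {Q : Fin r → Prop} {p : (Fin r → K) × (Fin m → K) × (Fin r → K)} :
    p ∈ coordSupported K r m Q ↔ ∀ i, ¬ Q i → p.1 i = 0 ∧ p.2.2 i = 0 := Iff.rfl

theorem coordSupported_mono {P Q : Fin r → Prop} (h : ∀ i, P i → Q i) :
    coordSupported K r m P ≤ coordSupported K r m Q :=
  fun _ hp i hi => hp i (mt (h i) hi)

variable (K r m) in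
noncomputable def coordSupportedEquiv (Q : Fin r → Prop) [DecidablePred Q] :
    coordSupported K r m Q ≃ₗ[K] ({i // Q i} → K) × (Fin m → K) × ({i // Q i} → K) where
  toFun p := (fun i => p.1.1 i, p.1.2.1, fun i => p.1.2.2 i)
  map_add' _ _ := rfl
  map_smul' _ _ := rfl
  invFun g := ⟨(fun i => if h : Q i then g.1 ⟨i, h⟩ else 0, g.2.1,
      fun i => if h : Q i then g.2.2 ⟨i, h⟩ else 0), fun i hi => by simp [hi]⟩
  left_inv p := by
    ext i
    · by_cases h : Q i
      · simp [h]
      · simp [h, (p.2 i h).1]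
    · rfl
    · by_cases h : Q i
      · simp [h]
      · simp [h, (p.2 i h).2]
  right_inv g := by
    ext i <;> simp [i.2]

theorem finrank_coordSupported (Q : Fin r → Prop) :
    Module.finrank K (coordSupported K r m Q) = 2 * Nat.card {i // Q i} + m := by
  classical
  rw [(coordSupportedEquiv K r m Q).finrank_eq]
  simp [Module.finrank_prod, Nat.card_eq_fintype_card]
  ring

theorem ker_torusAct_sub_id (t : Fin r → Kˣ) :
    LinearMap.ker (torusAct K r m t - LinearMap.id) =
      coordSupported K r m (fun i => t i = 1) := by
  ext p
  simp only [LinearMap.mem_ker, LinearMap.sub_apply, LinearMap.id_apply, sub_eq_zero, torusAct,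
    LinearMap.coe_mk, AddHom.coe_mk, Prod.ext_iff, funext_iff, mul_left_eq_self₀,
    Units.val_eq_one, inv_eq_one, mem_coordSupported, true_and, ← forall_and, or_iff_not_imp_left]

theorem rank_torusAct_sub_id (t : Fin r → Kˣ) :
    LinearMap.rank (torusAct K r m t - LinearMap.id) = 2 * Nat.card {i // t i ≠ 1} := by
  have hrk := LinearMap.finrank_range_add_finrank_ker (torusAct K r m t - LinearMap.id)
  rw [ker_torusAct_sub_id, finrank_coordSupported] at hrk
  have hcard := Nat.card_subtype_add_card_subtype_not fun i => t i = 1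
  simp only [Nat.card_fin, ← ne_eq] at hcard
  rw [LinearMap.rank, ← Module.finrank_eq_rank]
  simp only [Module.finrank_prod, Module.finrank_fin_fun] at hrk
  exact_mod_cast (by omega : _ = 2 * Nat.card {i // t i ≠ 1})

theorem iInf_ker_torusAct_monomialHom_sub_id [Infinite K] {d : ℕ} (M : Fin r → Fin d → ℤ) :
    ⨅ s : Fin d → Kˣ, LinearMap.ker (torusAct K r m (monomialHom K r d M s) - LinearMap.id) =
      coordSupported K r m (fun i => M i = 0) := by
  obtain ⟨s₀, hs₀⟩ := exists_forall_monomialHom_ne_one (K := K) M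
  refine le_antisymm ((iInf_le _ s₀).trans ?_) (le_iInf fun s => ?_) <;>
    rw [ker_torusAct_sub_id] <;> refine coordSupported_mono fun i hi => ?_
  · exact not_not.1 (mt (hs₀ i) (not_not.2 hi))
  · exact monomialHom_apply_eq_one_of_eq_zero M hi s

end TorusAct

theorem fixed_space_of_k_maximal_torus_general
    (K : Type*) [Field K] [IsAlgClosed K]
    (r m k : ℕ) (hk : Even k)
    (d : ℕ) (hd : d = k / 2) (M : Fin r → Fin d → ℤ)
    (hinj : Function.Injective (monomialHom K r d M))
    (hsub : ∀ s : Fin d → Kˣ,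
      LinearMap.rank (torusAct K r m (monomialHom K r d M s) - LinearMap.id)
        ≤ (k : Cardinal)) :
    Module.finrank K
        ↥(⨅ s : Fin d → Kˣ,
            LinearMap.ker (torusAct K r m (monomialHom K r d M s) - LinearMap.id)) =
      2 * r + m - k := by
  obtain ⟨s₀, hs₀⟩ := exists_forall_monomialHom_ne_one (K := K) M
  have hupper : 2 * Nat.card {i // M i ≠ 0} ≤ k := by
    have hrank := hsub s₀
    rw [rank_torusAct_sub_id] at hrank
    exact (Nat.mul_le_mul_left 2 (Nat.card_le_card_of_injective
      (Subtype.impEmbedding _ _ hs₀) (Subtype.impEmbedding _ _ hs₀).injective)).trans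
      (by exact_mod_cast hrank)
  have hlower := le_card_of_injective_monomialHom M hinj
  have hcard := Nat.card_subtype_add_card_subtype_not fun i => M i = 0
  simp only [Nat.card_fin, ← ne_eq] at hcard
  rw [iInf_ker_torusAct_monomialHom_sub_id, finrank_coordSupported]
  have := Nat.even_iff.1 hk
  omega

/-- If `S` is a subtorus of the split maximal torus `T ≅ (K̄ˣ)^r` contained in
`H_k = {h : rank(h - 1; X) ≤ k}` with `dim S = k/2`, then the common fixed point space
`X^S` has dimension `dim X − k`. -/
theorem fixed_space_of_k_maximal_torus
    (K : Type*) [Field K] [IsAlgClosed K] (hchar : (2 : K) ≠ 0)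
    (r m k : ℕ) (hm : m ≤ 1) (hk : Even k) (hkX : k ≤ 2 * r + m)
    (d : ℕ) (hd : d = k / 2) (M : Fin r → Fin d → ℤ)
    (hinj : Function.Injective (monomialHom K r d M))
    (hsub : ∀ s : Fin d → Kˣ,
      LinearMap.rank (torusAct K r m (monomialHom K r d M s) - LinearMap.id)
        ≤ (k : Cardinal)) :
    Module.finrank K
        ↥(⨅ s : Fin d → Kˣ,
            LinearMap.ker (torusAct K r m (monomialHom K r d M s) - LinearMap.id)) =
      2 * r + m - k :=
  fixed_space_of_k_maximal_torus_general K r m k hk d hd M hinj hsub
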